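/- Let p₁,p₂,p₃,p₄,p₅,q₁,q₂,q₃ ∈ ℝ and let (A₁,A₂) : ℝ → ℂ² be a differentiable solution of the system (ODE). Then the function τ ↦ |A₁(τ)|² + |A₂(τ)|² is constant on ℝ; call its value ρ. Moreover, the quadratic quantities D, R, I are differentiable and satisfy on ℝ: D' = 2I·(p₁D + (p₂-p₃)R) + 2ρp₅·I, R' = 2I·(-(p₂+p₃)D + p₁R) - 2ρp₄·I, and I' = -2p₁(D² + R²) + 4p₃·D·R + 2ρ(-p₅D + p₄R). -/

import Mathlib

/-! Writing the ODE as `A' = -i F`, the product rule gives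
`(conj Aⱼ · Aₖ)' = i (conj Fⱼ · Aₖ - conj Aⱼ · Fₖ)`. Every claimed derivative is a real or
imaginary part of such expressions, hence a polynomial identity in the real coordinates of
`A₁, A₂`. The real multiplier `V` cancels in each of them, which is why the `qᵢ` do not appear.
For `|A₁|² + |A₂|²` the identity says that `conj z₁ · F₁ + conj z₂ · F₂` is real, so the sum is
constant, and it may then be replaced by its initial value `ρ` in the other three. -/

/-- The real-valued quadratic form `V`. -/
noncomputable def Vq (q₁ q₂ q₃ : ℝ) (z₁ z₂ : ℂ) : ℝ :=
  q₁ * Complex.normSq z₁ + 2 * q₂ * ((starRingEnd ℂ) z₁ * z₂).re + q₃ * Complex.normSq z₂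

/-- The first cubic nonlinearity `F₁`. -/
noncomputable def F₁ (p₁ p₂ p₃ p₄ p₅ q₁ q₂ q₃ : ℝ) (z₁ z₂ : ℂ) : ℂ :=
  (3 * p₂ + p₃ + 2 * p₄) * Complex.normSq z₁ * z₁
  + (p₁ + p₅) * (2 * Complex.normSq z₁ * z₂ + z₁ ^ 2 * (starRingEnd ℂ) z₂)
  + (p₂ - p₃) * (2 * z₁ * Complex.normSq z₂ + (starRingEnd ℂ) z₁ * z₂ ^ 2)
  - (p₁ - p₅) * Complex.normSq z₂ * z₂
  - 4 * p₁ * (((starRingEnd ℂ) z₁ * z₂).re : ℝ) * z₁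
  + (Vq q₁ q₂ q₃ z₁ z₂ : ℝ) * z₁

/-- The second cubic nonlinearity `F₂`. -/
noncomputable def F₂ (p₁ p₂ p₃ p₄ p₅ q₁ q₂ q₃ : ℝ) (z₁ z₂ : ℂ) : ℂ :=
  (p₁ + p₅) * Complex.normSq z₁ * z₁
  + (p₂ - p₃) * (2 * Complex.normSq z₁ * z₂ + z₁ ^ 2 * (starRingEnd ℂ) z₂)
  - (p₁ - p₅) * (2 * z₁ * Complex.normSq z₂ + (starRingEnd ℂ) z₁ * z₂ ^ 2)
  + (3 * p₂ + p₃ - 2 * p₄) * Complex.normSq z₂ * z₂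
  + 4 * p₁ * (((starRingEnd ℂ) z₁ * z₂).re : ℝ) * z₂
  + (Vq q₁ q₂ q₃ z₁ z₂ : ℝ) * z₂

/-- The quadratic quantity `D = |A₁|² - |A₂|²`. -/
noncomputable def Dq (A₁ A₂ : ℝ → ℂ) (τ : ℝ) : ℝ :=
  Complex.normSq (A₁ τ) - Complex.normSq (A₂ τ)

/-- The quadratic quantity `R = 2 Re (conj A₁ · A₂)`. -/
noncomputable def Rq (A₁ A₂ : ℝ → ℂ) (τ : ℝ) : ℝ :=
  2 * ((starRingEnd ℂ) (A₁ τ) * A₂ τ).re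

/-- The quadratic quantity `I = 2 Im (conj A₁ · A₂)`. -/
noncomputable def Iq (A₁ A₂ : ℝ → ℂ) (τ : ℝ) : ℝ :=
  2 * ((starRingEnd ℂ) (A₁ τ) * A₂ τ).im

open Complex ComplexConjugate

theorem Complex.normSq_eq_re_conj_mul_self (z : ℂ) : normSq z = (conj z * z).re := by
  rw [← normSq_eq_conj_mul_self, ofReal_re]

theorem Complex.eq_neg_I_mul_of_I_mul_eq {w v : ℂ} (h : I * w = v) : w = -I * v := by
  rw [← h, ← mul_assoc, neg_mul, I_mul_I, neg_neg, one_mul]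

section conjMul

variable {A B : ℝ → ℂ} {a b : ℂ} {τ : ℝ}

theorem HasDerivAt.conj_mul (hA : HasDerivAt A a τ) (hB : HasDerivAt B b τ) :
    HasDerivAt (fun t => conj (A t) * B t) (conj a * B τ + conj (A τ) * b) τ :=
  hA.star.mul hB

theorem HasDerivAt.re_conj_mul (hA : HasDerivAt A a τ) (hB : HasDerivAt B b τ) :
    HasDerivAt (fun t => (conj (A t) * B t).re) (conj a * B τ + conj (A τ) * b).re τ :=
  reCLM.hasFDerivAt.comp_hasDerivAt τ (hA.conj_mul hB)

theorem HasDerivAt.im_conj_mul (hA : HasDerivAt A a τ) (hB : HasDerivAt B b τ) :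
    HasDerivAt (fun t => (conj (A t) * B t).im) (conj a * B τ + conj (A τ) * b).im τ :=
  imCLM.hasFDerivAt.comp_hasDerivAt τ (hA.conj_mul hB)

theorem HasDerivAt.normSq (hA : HasDerivAt A a τ) :
    HasDerivAt (fun t => normSq (A t)) (conj a * A τ + conj (A τ) * a).re τ := by
  simpa only [← normSq_eq_re_conj_mul_self] using hA.re_conj_mul hA

end conjMul

section solution

variable {p₁ p₂ p₃ p₄ p₅ q₁ q₂ q₃ : ℝ} {A₁ A₂ : ℝ → ℂ} {τ : ℝ}

theorem hasDerivAt_normSq_add_normSq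
    (h₁ : HasDerivAt A₁ (-I * F₁ p₁ p₂ p₃ p₄ p₅ q₁ q₂ q₃ (A₁ τ) (A₂ τ)) τ)
    (h₂ : HasDerivAt A₂ (-I * F₂ p₁ p₂ p₃ p₄ p₅ q₁ q₂ q₃ (A₁ τ) (A₂ τ)) τ) :
    HasDerivAt (fun t => normSq (A₁ t) + normSq (A₂ t)) 0 τ :=
  (h₁.normSq.add h₂.normSq).congr_deriv (by
    simp only [F₁, F₂, Vq, normSq_apply, mul_re, mul_im, add_re, add_im, sub_re, sub_im,
      neg_re, neg_im, ofReal_re, ofReal_im, I_re, I_im, conj_re, conj_im, pow_two, re_ofNat,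
      im_ofNat]
    ring)

theorem hasDerivAt_Dq
    (h₁ : HasDerivAt A₁ (-I * F₁ p₁ p₂ p₃ p₄ p₅ q₁ q₂ q₃ (A₁ τ) (A₂ τ)) τ)
    (h₂ : HasDerivAt A₂ (-I * F₂ p₁ p₂ p₃ p₄ p₅ q₁ q₂ q₃ (A₁ τ) (A₂ τ)) τ) :
    HasDerivAt (Dq A₁ A₂)
      (2 * Iq A₁ A₂ τ * (p₁ * Dq A₁ A₂ τ + (p₂ - p₃) * Rq A₁ A₂ τ)
        + 2 * (normSq (A₁ τ) + normSq (A₂ τ)) * p₅ * Iq A₁ A₂ τ) τ :=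
  (h₁.normSq.sub h₂.normSq).congr_deriv (by
    simp only [Dq, Rq, Iq, F₁, F₂, Vq, normSq_apply, mul_re, mul_im, add_re, add_im, sub_re,
      sub_im, neg_re, neg_im, ofReal_re, ofReal_im, I_re, I_im, conj_re, conj_im, pow_two,
      re_ofNat, im_ofNat]
    ring)

theorem hasDerivAt_Rq
    (h₁ : HasDerivAt A₁ (-I * F₁ p₁ p₂ p₃ p₄ p₅ q₁ q₂ q₃ (A₁ τ) (A₂ τ)) τ)
    (h₂ : HasDerivAt A₂ (-I * F₂ p₁ p₂ p₃ p₄ p₅ q₁ q₂ q₃ (A₁ τ) (A₂ τ)) τ) :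
    HasDerivAt (Rq A₁ A₂)
      (2 * Iq A₁ A₂ τ * (-((p₂ + p₃) * Dq A₁ A₂ τ) + p₁ * Rq A₁ A₂ τ)
        - 2 * (normSq (A₁ τ) + normSq (A₂ τ)) * p₄ * Iq A₁ A₂ τ) τ :=
  ((h₁.re_conj_mul h₂).const_mul 2).congr_deriv (by
    simp only [Dq, Rq, Iq, F₁, F₂, Vq, normSq_apply, mul_re, mul_im, add_re, add_im, sub_re,
      sub_im, neg_re, neg_im, ofReal_re, ofReal_im, I_re, I_im, conj_re, conj_im, pow_two,
      re_ofNat, im_ofNat]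
    ring)

theorem hasDerivAt_Iq
    (h₁ : HasDerivAt A₁ (-I * F₁ p₁ p₂ p₃ p₄ p₅ q₁ q₂ q₃ (A₁ τ) (A₂ τ)) τ)
    (h₂ : HasDerivAt A₂ (-I * F₂ p₁ p₂ p₃ p₄ p₅ q₁ q₂ q₃ (A₁ τ) (A₂ τ)) τ) :
    HasDerivAt (Iq A₁ A₂)
      (-(2 * p₁ * (Dq A₁ A₂ τ ^ 2 + Rq A₁ A₂ τ ^ 2)) + 4 * p₃ * Dq A₁ A₂ τ * Rq A₁ A₂ τ
        + 2 * (normSq (A₁ τ) + normSq (A₂ τ)) * (-(p₅ * Dq A₁ A₂ τ) + p₄ * Rq A₁ A₂ τ)) τ :=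
  ((h₁.im_conj_mul h₂).const_mul 2).congr_deriv (by
    simp only [Dq, Rq, F₁, F₂, Vq, normSq_apply, mul_re, mul_im, add_re, add_im, sub_re,
      sub_im, neg_re, neg_im, ofReal_re, ofReal_im, I_re, I_im, conj_re, conj_im, pow_two,
      re_ofNat, im_ofNat]
    ring)

end solution

/-- Along any solution of the ODE system, `|A₁|² + |A₂|²` is conserved and the
quadratic quantities `(D, R, I)` solve the quadratic system (QQQ). -/
theorem stmt_13 (p₁ p₂ p₃ p₄ p₅ q₁ q₂ q₃ : ℝ)
    (A₁ A₂ A₁' A₂' : ℝ → ℂ)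
    (hA₁ : ∀ τ, HasDerivAt A₁ (A₁' τ) τ)
    (hA₂ : ∀ τ, HasDerivAt A₂ (A₂' τ) τ)
    (hODE₁ : ∀ τ, Complex.I * A₁' τ = F₁ p₁ p₂ p₃ p₄ p₅ q₁ q₂ q₃ (A₁ τ) (A₂ τ))
    (hODE₂ : ∀ τ, Complex.I * A₂' τ = F₂ p₁ p₂ p₃ p₄ p₅ q₁ q₂ q₃ (A₁ τ) (A₂ τ))
    (ρ : ℝ) (hρ : ρ = Complex.normSq (A₁ 0) + Complex.normSq (A₂ 0)) :
    (∀ τ : ℝ, Complex.normSq (A₁ τ) + Complex.normSq (A₂ τ) = ρ) ∧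
    (∀ τ : ℝ, HasDerivAt (Dq A₁ A₂)
        (2 * Iq A₁ A₂ τ * (p₁ * Dq A₁ A₂ τ + (p₂ - p₃) * Rq A₁ A₂ τ)
          + 2 * ρ * p₅ * Iq A₁ A₂ τ) τ) ∧
    (∀ τ : ℝ, HasDerivAt (Rq A₁ A₂)
        (2 * Iq A₁ A₂ τ * (-((p₂ + p₃) * Dq A₁ A₂ τ) + p₁ * Rq A₁ A₂ τ)
          - 2 * ρ * p₄ * Iq A₁ A₂ τ) τ) ∧
    (∀ τ : ℝ, HasDerivAt (Iq A₁ A₂)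
        (-(2 * p₁ * (Dq A₁ A₂ τ ^ 2 + Rq A₁ A₂ τ ^ 2)) + 4 * p₃ * Dq A₁ A₂ τ * Rq A₁ A₂ τ
          + 2 * ρ * (-(p₅ * Dq A₁ A₂ τ) + p₄ * Rq A₁ A₂ τ)) τ) := by
  have h₁ τ := (hA₁ τ).congr_deriv (eq_neg_I_mul_of_I_mul_eq (hODE₁ τ))
  have h₂ τ := (hA₂ τ).congr_deriv (eq_neg_I_mul_of_I_mul_eq (hODE₂ τ))
  have hcons τ : normSq (A₁ τ) + normSq (A₂ τ) = ρ := by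
    rw [hρ]
    exact is_const_of_deriv_eq_zero
      (fun t => (hasDerivAt_normSq_add_normSq (h₁ t) (h₂ t)).differentiableAt)
      (fun t => (hasDerivAt_normSq_add_normSq (h₁ t) (h₂ t)).deriv) τ 0
  refine ⟨hcons, fun τ => ?_, fun τ => ?_, fun τ => ?_⟩
  · exact hcons τ ▸ hasDerivAt_Dq (h₁ τ) (h₂ τ)
  · exact hcons τ ▸ hasDerivAt_Rq (h₁ τ) (h₂ τ)
  · exact hcons τ ▸ hasDerivAt_Iq (h₁ τ) (h₂ τ)
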